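/- For every k ∈ M, setting V_k := {k} ∪ ⋃_{z ∈ P(k)} (y(z) ∪ e(z)), one has (P(k) \ {k}) ∪ ⋃_{z ∈ V_k} A_z = M. -/

import Mathlib

open scoped Classical
open Finset MeasureTheory

namespace BSHM

noncomputable section

/-- The set of candidate parents of machine type `i`: types `j ∈ M` with `j > i`
and a strictly smaller normalized cost rate per capacity unit. -/
def pset (m : ℕ) (g r : ℕ → ℝ) (i : ℕ) : Set ℕ :=
  {j | j ≤ m ∧ i < j ∧ r j / g j < r i / g i}

/-- The parent `p i` of machine type `i` (equal to `0` when the parent is undefined,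
since any actual parent has index `≥ 2`). -/
def p (m : ℕ) (g r : ℕ → ℝ) (i : ℕ) : ℕ := sInf (pset m g r i)

/-- `pdef i` asserts that the parent of `i` is defined. -/
def pdef (m : ℕ) (g r : ℕ → ℝ) (i : ℕ) : Prop := (pset m g r i).Nonempty

/-- One step of the parent relation: `b` is the (defined) parent of `a`. -/
def pstep (m : ℕ) (g r : ℕ → ℝ) (a b : ℕ) : Prop :=
  pdef m g r a ∧ b = p m g r a

/-- `P i`: the set consisting of `i` together with all of its iterated parents. -/
def P (m : ℕ) (g r : ℕ → ℝ) (i : ℕ) : Set ℕ :=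
  {z | Relation.ReflTransGen (pstep m g r) i z}

/-- `A i`: the set of nodes in the tree rooted at `i`,
i.e. all `z ∈ M` having `i` as an ancestor (or equal to `i`). -/
def A (m : ℕ) (g r : ℕ → ℝ) (i : ℕ) : Set ℕ :=
  {z | 1 ≤ z ∧ z ≤ m ∧ i ∈ P m g r z}

/-- `v i`: the lowest-indexed node in the tree rooted at `i`. -/
def v (m : ℕ) (g r : ℕ → ℝ) (i : ℕ) : ℕ := sInf (A m g r i)

/-- `y i`: the younger siblings of `i` (same parent status, smaller index). -/
def y (m : ℕ) (g r : ℕ → ℝ) (i : ℕ) : Set ℕ :=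
  {z | 1 ≤ z ∧ z ≤ m ∧ z < i ∧ p m g r z = p m g r i}

/-- `esib i`: the elder siblings of `i`. -/
def esib (m : ℕ) (g r : ℕ → ℝ) (i : ℕ) : Set ℕ :=
  {z | 1 ≤ z ∧ z ≤ m ∧ i < z ∧ p m g r z = p m g r i}

/-- `T k := {k} ∪ ⋃_{z ∈ P(k)} y(z)`. -/
def T (m : ℕ) (g r : ℕ → ℝ) (k : ℕ) : Set ℕ :=
  {k} ∪ ⋃ z ∈ P m g r k, y m g r z

/-- `T k` as a `Finset` (all relevant nodes lie in `{k} ∪ [1, m]`). -/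
def TIcc (m : ℕ) (g r : ℕ → ℝ) (k : ℕ) : Finset ℕ :=
  (insert k (Finset.Icc 1 m)).filter (fun z => z ∈ T m g r k)

end

end BSHM

namespace BSHM

section Forest

variable {m : ℕ} {g r : ℕ → ℝ}

def V (m : ℕ) (g r : ℕ → ℝ) (k : ℕ) : Set ℕ :=
  {k} ∪ ⋃ w ∈ P m g r k, (y m g r w ∪ esib m g r w)

lemma p_mem_pset {i : ℕ} (h : pdef m g r i) : p m g r i ∈ pset m g r i :=
  Nat.sInf_mem h

lemma p_eq_zero_of_not_pdef {i : ℕ} (h : ¬pdef m g r i) : p m g r i = 0 := by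
  rw [p, Set.not_nonempty_iff_eq_empty.mp h, Nat.sInf_empty]

lemma lt_of_pstep {a b : ℕ} (h : pstep m g r a b) : a < b :=
  h.2 ▸ (p_mem_pset h.1).2.1

lemma le_of_pstep {a b : ℕ} (h : pstep m g r a b) : b ≤ m :=
  h.2 ▸ (p_mem_pset h.1).1

lemma le_of_mem_P {k z : ℕ} (h : z ∈ P m g r k) : k ≤ z := by
  induction h with
  | refl => exact le_rfl
  | tail _ hstep ih => exact ih.trans (lt_of_pstep hstep).le

lemma exists_pstep_of_mem_P_of_ne {k z : ℕ} (h : z ∈ P m g r k) (hne : z ≠ k) :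
    ∃ u ∈ P m g r k, pstep m g r u z := by
  rcases Relation.ReflTransGen.cases_tail h with rfl | ⟨u, hu, hstep⟩
  · exact absurd rfl hne
  · exact ⟨u, hu, hstep⟩

lemma le_of_mem_P_of_ne {k z : ℕ} (h : z ∈ P m g r k) (hne : z ≠ k) : z ≤ m := by
  obtain ⟨_, _, hstep⟩ := exists_pstep_of_mem_P_of_ne h hne
  exact le_of_pstep hstep

lemma exists_root_mem_P (k : ℕ) : ∃ t ∈ P m g r k, ¬pdef m g r t := by
  by_cases hd : pdef m g r k
  · have hstep : pstep m g r k (p m g r k) := ⟨hd, rfl⟩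
    have hlt := lt_of_pstep hstep
    have hle := le_of_pstep hstep
    obtain ⟨t, ht, hroot⟩ := exists_root_mem_P (p m g r k)
    exact ⟨t, Relation.ReflTransGen.head hstep ht, hroot⟩
  · exact ⟨k, Relation.ReflTransGen.refl, hd⟩
termination_by m - k

lemma mem_V_of_p_eq {k w u : ℕ} (hw1 : 1 ≤ w) (hwm : w ≤ m) (hwP : w ∉ P m g r k)
    (hu : u ∈ P m g r k) (hp : p m g r w = p m g r u) : w ∈ V m g r k := by
  have hwu : w ≠ u := fun h => hwP (h ▸ hu)
  refine Or.inr (Set.mem_biUnion hu ?_)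
  rcases hwu.lt_or_gt with hlt | hgt
  · exact Or.inl ⟨hw1, hwm, hlt, hp⟩
  · exact Or.inr ⟨hw1, hwm, hgt, hp⟩

/-- Climb from `w` towards its root until reaching `k` or a sibling of a node of `P k`;
roots are siblings of each other, since `p` is `0` on all of them. -/
lemma exists_mem_V_mem_P {k w : ℕ} (hw1 : 1 ≤ w) (hwm : w ≤ m)
    (hw : w ∉ P m g r k \ {k}) : ∃ z ∈ V m g r k, z ∈ P m g r w := by
  by_cases hwk : w = k
  · exact hwk ▸ ⟨w, Or.inl rfl, Relation.ReflTransGen.refl⟩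
  have hwP : w ∉ P m g r k := fun h => hw ⟨h, hwk⟩
  by_cases hd : pdef m g r w
  · have hstep : pstep m g r w (p m g r w) := ⟨hd, rfl⟩
    have hlt := lt_of_pstep hstep
    have hle := le_of_pstep hstep
    by_cases hb : p m g r w ∈ P m g r k \ {k}
    · obtain ⟨u, hu, hustep⟩ := exists_pstep_of_mem_P_of_ne hb.1 hb.2
      exact ⟨w, mem_V_of_p_eq hw1 hwm hwP hu hustep.2, Relation.ReflTransGen.refl⟩
    · obtain ⟨z, hz, hzP⟩ := exists_mem_V_mem_P (by omega) hle hb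
      exact ⟨z, hz, Relation.ReflTransGen.head hstep hzP⟩
  · obtain ⟨t, ht, hroot⟩ := exists_root_mem_P (m := m) (g := g) (r := r) k
    have hp : p m g r w = p m g r t := by
      rw [p_eq_zero_of_not_pdef hd, p_eq_zero_of_not_pdef hroot]
    exact ⟨w, mem_V_of_p_eq hw1 hwm hwP ht hp, Relation.ReflTransGen.refl⟩
termination_by m - w

end Forest

theorem statement_6_general (m : ℕ) (g r : ℕ → ℝ) :
    ∀ k, 1 ≤ k → k ≤ m →
      (P m g r k \ {k}) ∪
        (⋃ z ∈ ({k} ∪ ⋃ w ∈ P m g r k, (y m g r w ∪ esib m g r w) : Set ℕ),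
          A m g r z)
      = Set.Icc 1 m := by
  intro k hk1 _
  ext w
  constructor
  · rintro (⟨hwP, hwk⟩ | hw)
    · exact ⟨hk1.trans (le_of_mem_P hwP), le_of_mem_P_of_ne hwP hwk⟩
    · obtain ⟨z, -, hzA⟩ := Set.mem_iUnion₂.mp hw
      exact ⟨hzA.1, hzA.2.1⟩
  · rintro ⟨hw1, hwm⟩
    by_cases hw : w ∈ P m g r k \ {k}
    · exact Or.inl hw
    · obtain ⟨z, hz, hzP⟩ := exists_mem_V_mem_P hw1 hwm hw
      exact Or.inr (Set.mem_biUnion (s := V m g r k) hz ⟨hw1, hwm, hzP⟩)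

/-- For every `k ∈ M`, setting
`V_k := {k} ∪ ⋃_{z ∈ P(k)} (y(z) ∪ e(z))`, one has
`(P(k) \ {k}) ∪ ⋃_{z ∈ V_k} A(z) = M`. -/
theorem statement_6 (m : ℕ) (g r : ℕ → ℝ)
    (hm : 1 ≤ m)
    (hg1 : 0 < g 1) (hr1 : 0 < r 1)
    (hg : ∀ i j, 1 ≤ i → i < j → j ≤ m → g i < g j)
    (hr : ∀ i j, 1 ≤ i → i < j → j ≤ m → r i < r j) :
    ∀ k, 1 ≤ k → k ≤ m →
      (P m g r k \ {k}) ∪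
        (⋃ z ∈ ({k} ∪ ⋃ w ∈ P m g r k, (y m g r w ∪ esib m g r w) : Set ℕ),
          A m g r z)
      = Set.Icc 1 m :=
  statement_6_general m g r

end BSHM
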